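/- arXiv:2504.17008 — 2 statements merged into one kernel-verified Lean document; each statement's English description precedes it below -/
import Mathlib

section
/- Let γ > 0 and let φ : [0,∞) → ℝ be strictly increasing on [0,∞) such that ψ(z) = φ(e^z) is convex on ℝ. If q, p ∈ F_γ are probability densities (⟨q⟩ = ⟨p⟩ = 1), then D_{φ,γ}(q,p) = 0 holds if and only if q = p ν-almost everywhere. -/
open MeasureTheory

/-- `⟨g^{1+γ}⟩`, `⟨g f^γ⟩`, `⟨f^{1+γ}⟩`-based functional density power divergence. -/
noncomputable def FDPD {X : Type*} [MeasurableSpace X] (ν : Measure X)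
    (φ : ℝ → ℝ) (γ : ℝ) (g f : X → NNReal) : ℝ :=
  (1 / γ) * φ (∫⁻ x, (g x : ENNReal) ^ (1 + γ) ∂ν).toReal
    - ((1 + γ) / γ) * φ (∫⁻ x, (g x : ENNReal) * (f x : ENNReal) ^ γ ∂ν).toReal
    + φ (∫⁻ x, (f x : ENNReal) ^ (1 + γ) ∂ν).toReal

/-- Membership in the class `F_γ`: measurable, not a.e. zero, with `⟨g^{1+γ}⟩ < ∞`. -/
def MemF {X : Type*} [MeasurableSpace X] (ν : Measure X) (γ : ℝ) (g : X → NNReal) : Prop :=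
  Measurable g ∧ ¬ (g =ᵐ[ν] 0) ∧ (∫⁻ x, (g x : ENNReal) ^ (1 + γ) ∂ν) ≠ ⊤

/-!
By Hölder's inequality with exponents `1 + γ` and `(1 + γ) / γ`, the cross term `⟨q p^γ⟩` is at
most the geometric mean `⟨q^{1+γ}⟩^{1/(1+γ)} ⟨p^{1+γ}⟩^{γ/(1+γ)}`, and convexity of `φ ∘ exp` bounds
`φ` of that geometric mean by the arithmetic mean `(φ⟨q^{1+γ}⟩ + γ φ⟨p^{1+γ}⟩) / (1 + γ)`.
`D_{φ,γ}(q, p) = 0` says that `φ⟨q p^γ⟩` equals this arithmetic mean, so strict monotonicity of `φ`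
forces equality in Hölder's inequality. The equality case of Young's inequality for the normalised
functions then gives `q^{1+γ} ∝ p^{1+γ}` a.e., and the constant is `1` because `q` and `p` have the
same total mass.
-/

open Set
open scoped ENNReal NNReal

namespace ENNReal

variable {α : Type*} [MeasurableSpace α] {μ : Measure α}

theorem ae_rpow_eq_rpow_of_lintegral_mul_eq_one {p q : ℝ} (hpq : p.HolderConjugate q)
    {f g : α → ℝ≥0∞} (hf : AEMeasurable f μ) (hg : AEMeasurable g μ)
    (hf_norm : ∫⁻ a, f a ^ p ∂μ = 1) (hg_norm : ∫⁻ a, g a ^ q ∂μ = 1)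
    (hfg : ∫⁻ a, (f * g) a ∂μ = 1) :
    ∀ᵐ a ∂μ, f a ^ p = g a ^ q := by
  set young : α → ℝ≥0∞ := fun a => f a ^ p / ENNReal.ofReal p + g a ^ q / ENNReal.ofReal q
  have hyoung_int : ∫⁻ a, young a ∂μ = 1 := by
    simp only [young, div_eq_mul_inv]
    rw [lintegral_add_left' ((hf.pow_const _).mul_const _), lintegral_mul_const'' _ (hf.pow_const p),
      lintegral_mul_const' _ _ (by simp [hpq.symm.pos]), hf_norm, hg_norm, one_mul, one_mul,
      hpq.inv_add_inv_ennreal]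
  have hyoung : f * g =ᵐ[μ] young :=
    ae_eq_of_ae_le_of_lintegral_le (.of_forall fun a => young_inequality (f a) (g a) hpq)
      (hfg ▸ one_ne_top) (((hf.pow_const _).div_const _).add ((hg.pow_const _).div_const _))
      (by rw [hyoung_int, hfg])
  have hf_fin := ae_lt_top' (hf.pow_const p) (by simp [hf_norm])
  have hg_fin := ae_lt_top' (hg.pow_const q) (by simp [hg_norm])
  filter_upwards [hyoung, hf_fin, hg_fin] with a ha hfa hga
  rw [rpow_lt_top_iff_of_pos hpq.pos] at hfa
  rw [rpow_lt_top_iff_of_pos hpq.symm.pos] at hga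
  simpa [hfa.ne, hga.ne] using (young_inequality_eq_iff (f a) (g a) hpq).mp ha

theorem ae_rpow_mul_lintegral_eq_of_lintegral_mul_eq_Lp_mul_Lq {p q : ℝ}
    (hpq : p.HolderConjugate q) {f g : α → ℝ≥0∞} (hf : AEMeasurable f μ) (hg : AEMeasurable g μ)
    (hf_nonzero : ∫⁻ a, f a ^ p ∂μ ≠ 0) (hf_top : ∫⁻ a, f a ^ p ∂μ ≠ ⊤)
    (hg_nonzero : ∫⁻ a, g a ^ q ∂μ ≠ 0) (hg_top : ∫⁻ a, g a ^ q ∂μ ≠ ⊤)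
    (heq : ∫⁻ a, (f * g) a ∂μ = (∫⁻ a, f a ^ p ∂μ) ^ (1 / p) * (∫⁻ a, g a ^ q ∂μ) ^ (1 / q)) :
    ∀ᵐ a ∂μ, f a ^ p * ∫⁻ c, g c ^ q ∂μ = g a ^ q * ∫⁻ c, f c ^ p ∂μ := by
  set nf := (∫⁻ a, f a ^ p ∂μ) ^ (1 / p)
  set ng := (∫⁻ a, g a ^ q ∂μ) ^ (1 / q)
  have hnf : nf ≠ 0 := by simp [nf, hf_nonzero, hf_top]
  have hng : ng ≠ 0 := by simp [ng, hg_nonzero, hg_top]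
  have hnf_top : nf ≠ ⊤ := rpow_ne_top_of_nonneg (by simp [hpq.nonneg]) hf_top
  have hng_top : ng ≠ ⊤ := rpow_ne_top_of_nonneg (by simp [hpq.symm.nonneg]) hg_top
  have hnorm_mul : ∫⁻ a, (funMulInvSnorm f p μ * funMulInvSnorm g q μ) a ∂μ = 1 := by
    simp only [Pi.mul_apply, funMulInvSnorm]
    calc ∫⁻ a, f a * nf⁻¹ * (g a * ng⁻¹) ∂μ = (∫⁻ a, (f * g) a ∂μ) * (nf⁻¹ * ng⁻¹) := by
          rw [← lintegral_mul_const' _ _ (mul_ne_top (inv_ne_top.mpr hnf) (inv_ne_top.mpr hng))]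
          exact lintegral_congr fun a => by simp only [Pi.mul_apply]; ring
      _ = 1 := by
          rw [heq, mul_mul_mul_comm, ENNReal.mul_inv_cancel hnf hnf_top,
            ENNReal.mul_inv_cancel hng hng_top, one_mul]
  filter_upwards [ae_rpow_eq_rpow_of_lintegral_mul_eq_one hpq (hf.mul_const _) (hg.mul_const _)
    (lintegral_rpow_funMulInvSnorm_eq_one hpq.pos hf_nonzero hf_top)
    (lintegral_rpow_funMulInvSnorm_eq_one hpq.symm.pos hg_nonzero hg_top) hnorm_mul] with a ha
  change funMulInvSnorm f p μ a ^ p = funMulInvSnorm g q μ a ^ q at ha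
  rw [funMulInvSnorm_rpow hpq.pos, funMulInvSnorm_rpow hpq.symm.pos, ← div_eq_mul_inv,
    ← div_eq_mul_inv, ENNReal.div_eq_div_iff hg_nonzero hg_top hf_nonzero hf_top] at ha
  rw [mul_comm, ha, mul_comm]

theorem ae_eq_of_ae_rpow_mul_eq_of_lintegral_eq {r : ℝ} (hr : 0 < r) {f g : α → ℝ≥0∞}
    {a b : ℝ≥0∞} (ha : a ≠ 0) (ha_top : a ≠ ⊤) (hb_top : b ≠ ⊤)
    (hfg : ∫⁻ x, f x ∂μ = ∫⁻ x, g x ∂μ) (hg : ∫⁻ x, g x ∂μ ≠ 0) (hg_top : ∫⁻ x, g x ∂μ ≠ ⊤)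
    (h : ∀ᵐ x ∂μ, f x ^ r * b = g x ^ r * a) : f =ᵐ[μ] g := by
  have hr' : 0 ≤ r⁻¹ := inv_nonneg.2 hr.le
  have hroot : ∀ᵐ x ∂μ, f x * b ^ r⁻¹ = g x * a ^ r⁻¹ := h.mono fun x hx => by
    simpa [mul_rpow_of_nonneg _ _ hr', hr.ne'] using congrArg (· ^ r⁻¹) hx
  have hab : b ^ r⁻¹ = a ^ r⁻¹ := by
    have hint := lintegral_congr_ae hroot
    rw [lintegral_mul_const' _ _ (rpow_ne_top_of_nonneg hr' hb_top),
      lintegral_mul_const' _ _ (rpow_ne_top_of_nonneg hr' ha_top), hfg] at hint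
    exact (ENNReal.mul_right_inj hg hg_top).mp hint
  filter_upwards [hroot] with x hx
  rwa [hab, ENNReal.mul_left_inj (by simp [ha, ha_top, hr]) (rpow_ne_top_of_nonneg hr' ha_top)]
    at hx

theorem rpow_rpow_one_add_div {γ : ℝ} (hγ : γ ≠ 0) (x : ℝ≥0∞) :
    (x ^ γ) ^ ((1 + γ) / γ) = x ^ (1 + γ) := by
  rw [← rpow_mul, mul_div_cancel₀ _ hγ]

end ENNReal

section DensityPower

variable {X : Type*} [MeasurableSpace X] {ν : Measure X} {γ : ℝ}

lemma holderConjugate_one_add_div (hγ : 0 < γ) : (1 + γ).HolderConjugate ((1 + γ) / γ) := by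
  rw [Real.holderConjugate_iff]
  exact ⟨by linarith, by field_simp⟩

lemma lintegral_mul_rpow_le (hγ : 0 < γ) {f g : X → ℝ≥0∞} (hf : AEMeasurable f ν)
    (hg : AEMeasurable g ν) :
    ∫⁻ x, f x * g x ^ γ ∂ν ≤
      (∫⁻ x, f x ^ (1 + γ) ∂ν) ^ (1 / (1 + γ)) * (∫⁻ x, g x ^ (1 + γ) ∂ν) ^ (γ / (1 + γ)) := by
  simpa only [Pi.mul_apply, ENNReal.rpow_rpow_one_add_div hγ.ne', one_div_div] using
    ENNReal.lintegral_mul_le_Lp_mul_Lq ν (holderConjugate_one_add_div hγ) hf (hg.pow_const γ)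

lemma ae_rpow_mul_lintegral_eq_of_lintegral_mul_rpow_eq (hγ : 0 < γ) {f g : X → ℝ≥0∞}
    (hf : AEMeasurable f ν) (hg : AEMeasurable g ν)
    (hf_nonzero : ∫⁻ x, f x ^ (1 + γ) ∂ν ≠ 0) (hf_top : ∫⁻ x, f x ^ (1 + γ) ∂ν ≠ ⊤)
    (hg_nonzero : ∫⁻ x, g x ^ (1 + γ) ∂ν ≠ 0) (hg_top : ∫⁻ x, g x ^ (1 + γ) ∂ν ≠ ⊤)
    (heq : ∫⁻ x, f x * g x ^ γ ∂ν =
      (∫⁻ x, f x ^ (1 + γ) ∂ν) ^ (1 / (1 + γ)) * (∫⁻ x, g x ^ (1 + γ) ∂ν) ^ (γ / (1 + γ))) :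
    ∀ᵐ x ∂ν, f x ^ (1 + γ) * ∫⁻ y, g y ^ (1 + γ) ∂ν = g x ^ (1 + γ) * ∫⁻ y, f y ^ (1 + γ) ∂ν := by
  have hpow : (fun x => (g x ^ γ) ^ ((1 + γ) / γ)) = fun x => g x ^ (1 + γ) :=
    funext fun x => ENNReal.rpow_rpow_one_add_div hγ.ne' (g x)
  have := ENNReal.ae_rpow_mul_lintegral_eq_of_lintegral_mul_eq_Lp_mul_Lq
    (holderConjugate_one_add_div hγ) hf (hg.pow_const γ) hf_nonzero hf_top
    (by simpa only [hpow] using hg_nonzero) (by simpa only [hpow] using hg_top)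
    (by simpa only [Pi.mul_apply, hpow, one_div_div] using heq)
  simpa only [ENNReal.rpow_rpow_one_add_div hγ.ne'] using this

lemma apply_rpow_mul_rpow_le_of_convexOn_exp {φ : ℝ → ℝ}
    (hψ : ConvexOn ℝ univ fun z : ℝ => φ (Real.exp z)) {a b w₁ w₂ : ℝ} (ha : 0 < a) (hb : 0 < b)
    (hw₁ : 0 ≤ w₁) (hw₂ : 0 ≤ w₂) (hw : w₁ + w₂ = 1) :
    φ (a ^ w₁ * b ^ w₂) ≤ w₁ * φ a + w₂ * φ b := by
  have := hψ.2 (mem_univ (Real.log a)) (mem_univ (Real.log b)) hw₁ hw₂ hw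
  simp only [smul_eq_mul, Real.exp_log ha, Real.exp_log hb] at this
  rwa [Real.rpow_def_of_pos ha, Real.rpow_def_of_pos hb, ← Real.exp_add, mul_comm (Real.log a),
    mul_comm (Real.log b)]

lemma eq_rpow_mul_rpow_of_le_of_apply_eq {φ : ℝ → ℝ} (hφ : StrictMonoOn φ (Ici 0))
    (hψ : ConvexOn ℝ univ fun z : ℝ => φ (Real.exp z)) {a b m w₁ w₂ : ℝ} (ha : 0 < a)
    (hb : 0 < b) (hw₁ : 0 ≤ w₁) (hw₂ : 0 ≤ w₂) (hw : w₁ + w₂ = 1) (hm : 0 ≤ m)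
    (hle : m ≤ a ^ w₁ * b ^ w₂) (hφm : φ m = w₁ * φ a + w₂ * φ b) : m = a ^ w₁ * b ^ w₂ := by
  refine hle.antisymm (not_lt.mp fun hlt => ?_)
  have := hφ hm (mem_Ici.2 (by positivity)) hlt
  linarith [apply_rpow_mul_rpow_le_of_convexOn_exp hψ ha hb hw₁ hw₂ hw]

lemma MemF.lintegral_rpow_ne_zero {g : X → ℝ≥0} (hg : MemF ν γ g) (hγ : 0 ≤ 1 + γ) :
    ∫⁻ x, (g x : ℝ≥0∞) ^ (1 + γ) ∂ν ≠ 0 := fun h =>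
  hg.2.1 <| (ENNReal.ae_eq_zero_of_lintegral_rpow_eq_zero hγ
    hg.1.coe_nnreal_ennreal.aemeasurable h).mono fun x hx => by simpa using hx

lemma fdpd_eq_zero_iff (hγ : 0 < γ) (φ : ℝ → ℝ) (g f : X → ℝ≥0) :
    FDPD ν φ γ g f = 0 ↔
      φ (∫⁻ x, (g x : ℝ≥0∞) * (f x : ℝ≥0∞) ^ γ ∂ν).toReal =
        1 / (1 + γ) * φ (∫⁻ x, (g x : ℝ≥0∞) ^ (1 + γ) ∂ν).toReal +
          γ / (1 + γ) * φ (∫⁻ x, (f x : ℝ≥0∞) ^ (1 + γ) ∂ν).toReal := by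
  have : 0 < 1 + γ := by linarith
  unfold FDPD
  field_simp
  constructor <;> intro h <;> linarith

lemma fdpd_congr_left {φ : ℝ → ℝ} {g g' f : X → ℝ≥0} (h : g =ᵐ[ν] g') :
    FDPD ν φ γ g f = FDPD ν φ γ g' f := by
  have hpow : ∫⁻ x, (g x : ℝ≥0∞) ^ (1 + γ) ∂ν = ∫⁻ x, (g' x : ℝ≥0∞) ^ (1 + γ) ∂ν :=
    lintegral_congr_ae (h.mono fun x hx => by simp only [hx])
  have hcross : ∫⁻ x, (g x : ℝ≥0∞) * (f x : ℝ≥0∞) ^ γ ∂ν =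
      ∫⁻ x, (g' x : ℝ≥0∞) * (f x : ℝ≥0∞) ^ γ ∂ν :=
    lintegral_congr_ae (h.mono fun x hx => by simp only [hx])
  rw [FDPD, FDPD, hpow, hcross]

lemma fdpd_self (hγ : 0 < γ) (φ : ℝ → ℝ) (f : X → ℝ≥0) : FDPD ν φ γ f f = 0 := by
  have : 0 < 1 + γ := by linarith
  rw [fdpd_eq_zero_iff hγ]
  simp_rw [ENNReal.rpow_add_of_nonneg _ _ zero_le_one hγ.le, ENNReal.rpow_one]
  field_simp

theorem lintegral_mul_rpow_eq_of_fdpd_eq_zero (hγ : 0 < γ) {φ : ℝ → ℝ}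
    (hφ : StrictMonoOn φ (Ici 0)) (hψ : ConvexOn ℝ univ fun z : ℝ => φ (Real.exp z))
    {g f : X → ℝ≥0} (hg : MemF ν γ g) (hf : MemF ν γ f) (h : FDPD ν φ γ g f = 0) :
    ∫⁻ x, (g x : ℝ≥0∞) * (f x : ℝ≥0∞) ^ γ ∂ν =
      (∫⁻ x, (g x : ℝ≥0∞) ^ (1 + γ) ∂ν) ^ (1 / (1 + γ)) *
        (∫⁻ x, (f x : ℝ≥0∞) ^ (1 + γ) ∂ν) ^ (γ / (1 + γ)) := by
  have h1γ : 0 < 1 + γ := by linarith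
  have hle := lintegral_mul_rpow_le (ν := ν) hγ hg.1.coe_nnreal_ennreal.aemeasurable
    hf.1.coe_nnreal_ennreal.aemeasurable
  have hC_top : (∫⁻ x, (g x : ℝ≥0∞) ^ (1 + γ) ∂ν) ^ (1 / (1 + γ)) *
      (∫⁻ x, (f x : ℝ≥0∞) ^ (1 + γ) ∂ν) ^ (γ / (1 + γ)) ≠ ⊤ :=
    ENNReal.mul_ne_top (ENNReal.rpow_ne_top_of_nonneg (by positivity) hg.2.2)
      (ENNReal.rpow_ne_top_of_nonneg (by positivity) hf.2.2)
  rw [← ENNReal.toReal_eq_toReal_iff' (ne_top_of_le_ne_top hC_top hle) hC_top,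
    ENNReal.toReal_mul, ← ENNReal.toReal_rpow, ← ENNReal.toReal_rpow]
  refine eq_rpow_mul_rpow_of_le_of_apply_eq hφ hψ
    (ENNReal.toReal_pos (hg.lintegral_rpow_ne_zero h1γ.le) hg.2.2)
    (ENNReal.toReal_pos (hf.lintegral_rpow_ne_zero h1γ.le) hf.2.2) (by positivity) (by positivity)
    (by field_simp) ENNReal.toReal_nonneg ?_ ((fdpd_eq_zero_iff hγ φ g f).mp h)
  simpa only [ENNReal.toReal_mul, ← ENNReal.toReal_rpow] using ENNReal.toReal_mono hC_top hle

end DensityPower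

theorem fdpd_eq_zero_iff_of_prob {X : Type*} [MeasurableSpace X] (ν : Measure X)
    (γ : ℝ) (hγ : 0 < γ)
    (φ : ℝ → ℝ) (hφ : StrictMonoOn φ (Set.Ici (0 : ℝ)))
    (hψ : ConvexOn ℝ Set.univ (fun z : ℝ => φ (Real.exp z)))
    (q p : X → NNReal) (hq : MemF ν γ q) (hp : MemF ν γ p)
    (hq1 : ∫⁻ x, (q x : ENNReal) ∂ν = 1) (hp1 : ∫⁻ x, (p x : ENNReal) ∂ν = 1) :
    FDPD ν φ γ q p = 0 ↔ q =ᵐ[ν] p := by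
  have h1γ : 0 < 1 + γ := by linarith
  refine ⟨fun h => ?_, fun h => by rw [fdpd_congr_left h, fdpd_self hγ]⟩
  have hpower := ae_rpow_mul_lintegral_eq_of_lintegral_mul_rpow_eq hγ
    hq.1.coe_nnreal_ennreal.aemeasurable hp.1.coe_nnreal_ennreal.aemeasurable
    (hq.lintegral_rpow_ne_zero h1γ.le) hq.2.2 (hp.lintegral_rpow_ne_zero h1γ.le) hp.2.2
    (lintegral_mul_rpow_eq_of_fdpd_eq_zero hγ hφ hψ hq hp h)
  have hcoe := ENNReal.ae_eq_of_ae_rpow_mul_eq_of_lintegral_eq h1γ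
    (hq.lintegral_rpow_ne_zero h1γ.le) hq.2.2 hp.2.2 (hq1.trans hp1.symm) (by simp [hp1])
    (by simp [hp1]) hpower
  exact hcoe.mono fun x hx => ENNReal.coe_inj.mp hx
end

section
/- Let γ > 0, let X = ℝ^d with Lebesgue measure, let Σ ∈ ℝ^{d×d} be invertible and μ ∈ ℝ^d, and let g, f ∈ F_γ. (1) For ζ > 0 and φ_ζ(z) = (z^ζ − 1)/ζ, the FDPD satisfies |det Σ|^{−γζ} · D_{φ_ζ,γ}(g_{Σ,μ}, f_{Σ,μ}) = D_{φ_ζ,γ}(g, f). (2) If additionally ⟨g f^γ⟩ > 0, then for φ(z) = log z the FDPD is exactly affine invariant: D_{log,γ}(g_{Σ,μ}, f_{Σ,μ}) = D_{log,γ}(g, f). -/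
open MeasureTheory

/-- Affine transformation of a nonnegative function: `g_{Σ,μ}(x) = |det Σ| ⬝ g(Σ x + μ)`. -/
noncomputable def affTrans {d : ℕ} (A : Matrix (Fin d) (Fin d) ℝ) (μ : Fin d → ℝ)
    (g : (Fin d → ℝ) → NNReal) : (Fin d → ℝ) → NNReal :=
  fun x => Real.toNNReal |A.det| * g (A.mulVec x + μ)

/-!
Substituting `y = A x + μ` multiplies Lebesgue measure by `|det A|⁻¹`, and the three integrands
of the FDPD are homogeneous of degree `1 + γ` in the pair `(g, f)`; hence each of the three
integrals for the transformed pair is `|det A| ^ γ` times the original one. Both `φ_ζ` and `log`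
turn multiplication of the argument by `r` into an affine map `φ (r z) = α φ z + β`, and `β`
cancels because the coefficients `1/γ`, `-(1+γ)/γ`, `1` of the FDPD sum to zero. For `log` this
needs the three integrals positive and finite; the cross term is finite by Hölder's inequality.
-/

open scoped ENNReal NNReal
open Set

section ChangeOfVariables

variable {d : ℕ} {A : Matrix (Fin d) (Fin d) ℝ}

theorem lintegral_comp_mulVec_add (hA : A.det ≠ 0) (μ : Fin d → ℝ) (h : (Fin d → ℝ) → ℝ≥0∞) :
    ∫⁻ x, h (A.mulVec x + μ) = ENNReal.ofReal |A.det|⁻¹ * ∫⁻ x, h x := by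
  have hinj : Function.Injective (Matrix.toLin' A) :=
    Matrix.mulVec_injective_iff_isUnit.mpr ((Matrix.isUnit_iff_isUnit_det A).mpr hA.isUnit)
  have hemb : MeasurableEmbedding (Matrix.toLin' A) :=
    (LinearMap.isClosedEmbedding_of_injective (LinearMap.ker_eq_bot.mpr hinj)).measurableEmbedding
  calc ∫⁻ x, h (A.mulVec x + μ)
      = ∫⁻ y, h (y + μ) ∂(Measure.map (Matrix.toLin' A) volume) := by
        simp only [hemb.lintegral_map, Matrix.toLin'_apply]
    _ = ENNReal.ofReal |A.det|⁻¹ * ∫⁻ x, h x := by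
        rw [Real.map_matrix_volume_pi_eq_smul_volume_pi hA, lintegral_smul_measure,
          lintegral_add_right_eq_self, abs_inv, smul_eq_mul]

theorem lintegral_affTrans_of_homogeneous (hA : A.det ≠ 0) (μ : Fin d → ℝ) {s : ℝ}
    {F : ℝ≥0 → ℝ≥0 → ℝ≥0∞}
    (hF : ∀ t : ℝ≥0, 0 < t → ∀ u v, F (t * u) (t * v) = (t : ℝ≥0∞) ^ s * F u v)
    (g f : (Fin d → ℝ) → ℝ≥0) :
    ∫⁻ x, F (affTrans A μ g x) (affTrans A μ f x)
      = ENNReal.ofReal |A.det| ^ (s - 1) * ∫⁻ x, F (g x) (f x) := by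
  have hc0 : ENNReal.ofReal |A.det| ≠ 0 := by simpa using hA
  have hct : ENNReal.ofReal |A.det| ≠ ⊤ := ENNReal.ofReal_ne_top
  simp only [affTrans, hF _ (Real.toNNReal_pos.mpr (abs_pos.mpr hA))]
  change ∫⁻ x, ENNReal.ofReal |A.det| ^ s * _ = _
  rw [lintegral_const_mul' _ _ (ENNReal.rpow_ne_top_of_ne_zero hc0 hct),
    lintegral_comp_mulVec_add hA μ (fun y => F (g y) (f y)), ← mul_assoc,
    ENNReal.ofReal_inv_of_pos (abs_pos.mpr hA), ENNReal.rpow_sub _ _ hc0 hct, ENNReal.rpow_one,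
    div_eq_mul_inv]

theorem FDPD_affTrans (hA : A.det ≠ 0) (μ : Fin d → ℝ) (φ : ℝ → ℝ) (γ : ℝ)
    (g f : (Fin d → ℝ) → ℝ≥0) :
    FDPD volume φ γ (affTrans A μ g) (affTrans A μ f)
      = FDPD volume (fun z => φ (|A.det| ^ γ * z)) γ g f := by
  have hscale : ∀ F : ℝ≥0 → ℝ≥0 → ℝ≥0∞,
      (∀ t : ℝ≥0, 0 < t → ∀ u v, F (t * u) (t * v) = (t : ℝ≥0∞) ^ (1 + γ) * F u v) →
      (∫⁻ x, F (affTrans A μ g x) (affTrans A μ f x)).toReal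
        = |A.det| ^ γ * (∫⁻ x, F (g x) (f x)).toReal := fun F hF => by
    rw [lintegral_affTrans_of_homogeneous hA μ hF, add_sub_cancel_left, ENNReal.toReal_mul,
      ← ENNReal.toReal_rpow, ENNReal.toReal_ofReal (abs_nonneg _)]
  simp only [FDPD]
  rw [hscale (fun u _ => (u : ℝ≥0∞) ^ (1 + γ)) fun t _ u _ => by
      rw [ENNReal.coe_mul, ENNReal.coe_mul_rpow],
    hscale (fun _ v => (v : ℝ≥0∞) ^ (1 + γ)) fun t _ _ v => by
      rw [ENNReal.coe_mul, ENNReal.coe_mul_rpow],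
    hscale (fun u v => (u : ℝ≥0∞) * (v : ℝ≥0∞) ^ γ) fun t ht u v => by
      rw [ENNReal.coe_mul, ENNReal.coe_mul, ENNReal.coe_mul_rpow,
        ENNReal.rpow_add _ _ (by exact_mod_cast ht.ne') ENNReal.coe_ne_top, ENNReal.rpow_one]
      ring]

end ChangeOfVariables

section Integrals

variable {X : Type*} [MeasurableSpace X] {ν : Measure X}

theorem FDPD_comp_const_mul {φ : ℝ → ℝ} {γ r α β : ℝ} {s : Set ℝ} (hγ : γ ≠ 0)
    (hφ : ∀ z ∈ s, φ (r * z) = α * φ z + β) {g f : X → ℝ≥0}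
    (hg : (∫⁻ x, (g x : ℝ≥0∞) ^ (1 + γ) ∂ν).toReal ∈ s)
    (hgf : (∫⁻ x, (g x : ℝ≥0∞) * (f x : ℝ≥0∞) ^ γ ∂ν).toReal ∈ s)
    (hf : (∫⁻ x, (f x : ℝ≥0∞) ^ (1 + γ) ∂ν).toReal ∈ s) :
    FDPD ν (fun z => φ (r * z)) γ g f = α * FDPD ν φ γ g f := by
  simp only [FDPD]
  rw [hφ _ hg, hφ _ hgf, hφ _ hf]
  field_simp
  ring

theorem lintegral_coe_rpow_ne_zero {g : X → ℝ≥0} (hg : AEMeasurable g ν) (h0 : ¬ g =ᵐ[ν] 0)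
    (p : ℝ) : ∫⁻ x, (g x : ℝ≥0∞) ^ p ∂ν ≠ 0 := by
  intro h
  apply h0
  rw [lintegral_eq_zero_iff' (hg.coe_nnreal_ennreal.pow_const p)] at h
  filter_upwards [h] with x hx
  rcases ENNReal.rpow_eq_zero_iff.mp hx with ⟨hx0, -⟩ | ⟨hxtop, -⟩
  · exact_mod_cast hx0
  · exact absurd hxtop ENNReal.coe_ne_top

theorem lintegral_mul_rpow_ne_top {γ : ℝ} (hγ : 0 < γ) {f g : X → ℝ≥0∞}
    (hf : AEMeasurable f ν) (hg : AEMeasurable g ν)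
    (hf' : ∫⁻ x, f x ^ (1 + γ) ∂ν ≠ ⊤) (hg' : ∫⁻ x, g x ^ (1 + γ) ∂ν ≠ ⊤) :
    ∫⁻ x, f x * g x ^ γ ∂ν ≠ ⊤ := by
  have hpq := Real.HolderConjugate.conjExponent (show 1 < 1 + γ by linarith)
  have hHolder := ENNReal.lintegral_mul_rpow_le_lintegral_rpow_mul_lintegral_rpow hpq hf hg
  rw [add_sub_cancel_left] at hHolder
  refine ne_top_of_le_ne_top (ENNReal.mul_ne_top ?_ ?_) hHolder
  · exact ENNReal.rpow_ne_top_of_nonneg (one_div_nonneg.mpr hpq.nonneg) hf'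
  · exact ENNReal.rpow_ne_top_of_nonneg (one_div_nonneg.mpr hpq.symm.nonneg) hg'

end Integrals

theorem fdpd_affine_invariance_general (d : ℕ) (γ ζ : ℝ) (hγ : 0 < γ)
    (A : Matrix (Fin d) (Fin d) ℝ) (hA : A.det ≠ 0) (μ : Fin d → ℝ)
    (g f : (Fin d → ℝ) → NNReal) (hg : MemF volume γ g) (hf : MemF volume γ f) :
    (|A.det| ^ (-(γ * ζ)) *
        FDPD volume (fun z : ℝ => (z ^ ζ - 1) / ζ) γ (affTrans A μ g) (affTrans A μ f)
      = FDPD volume (fun z : ℝ => (z ^ ζ - 1) / ζ) γ g f) ∧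
    ((∫⁻ x, (g x : ENNReal) * (f x : ENNReal) ^ γ ∂volume) ≠ 0 →
      FDPD volume Real.log γ (affTrans A μ g) (affTrans A μ f)
        = FDPD volume Real.log γ g f) := by
  obtain ⟨hg_meas, hg_ne_zero, hg_fin⟩ := hg
  obtain ⟨hf_meas, hf_ne_zero, hf_fin⟩ := hf
  have hdet : 0 < |A.det| := abs_pos.mpr hA
  set r := |A.det| ^ γ with hr_def
  have hr : 0 < r := by positivity
  refine ⟨?_, fun hgf_ne_zero => ?_⟩
  · have hφ : ∀ z ∈ Ici (0 : ℝ),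
        ((r * z) ^ ζ - 1) / ζ = r ^ ζ * ((z ^ ζ - 1) / ζ) + (r ^ ζ - 1) / ζ := fun z hz => by
      rw [Real.mul_rpow hr.le hz]
      ring
    rw [FDPD_affTrans hA, FDPD_comp_const_mul (φ := fun z => (z ^ ζ - 1) / ζ) hγ.ne' hφ
      ENNReal.toReal_nonneg ENNReal.toReal_nonneg ENNReal.toReal_nonneg, ← mul_assoc, hr_def,
      ← Real.rpow_mul hdet.le, ← Real.rpow_add hdet, neg_add_cancel, Real.rpow_zero, one_mul]
  · have hφ : ∀ z ∈ Ioi (0 : ℝ), Real.log (r * z) = 1 * Real.log z + Real.log r :=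
      fun z hz => by rw [Real.log_mul hr.ne' (ne_of_gt hz)]; ring
    have hgf_fin := lintegral_mul_rpow_ne_top hγ hg_meas.coe_nnreal_ennreal.aemeasurable
      hf_meas.coe_nnreal_ennreal.aemeasurable hg_fin hf_fin
    rw [FDPD_affTrans hA, FDPD_comp_const_mul (φ := Real.log) hγ.ne' hφ, one_mul]
    · exact ENNReal.toReal_pos (lintegral_coe_rpow_ne_zero hg_meas.aemeasurable hg_ne_zero _) hg_fin
    · exact ENNReal.toReal_pos hgf_ne_zero hgf_fin
    · exact ENNReal.toReal_pos (lintegral_coe_rpow_ne_zero hf_meas.aemeasurable hf_ne_zero _) hf_fin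

theorem fdpd_affine_invariance (d : ℕ) (γ ζ : ℝ) (hγ : 0 < γ) (hζ : 0 < ζ)
    (A : Matrix (Fin d) (Fin d) ℝ) (hA : A.det ≠ 0) (μ : Fin d → ℝ)
    (g f : (Fin d → ℝ) → NNReal) (hg : MemF volume γ g) (hf : MemF volume γ f) :
    (|A.det| ^ (-(γ * ζ)) *
        FDPD volume (fun z : ℝ => (z ^ ζ - 1) / ζ) γ (affTrans A μ g) (affTrans A μ f)
      = FDPD volume (fun z : ℝ => (z ^ ζ - 1) / ζ) γ g f) ∧
    ((∫⁻ x, (g x : ENNReal) * (f x : ENNReal) ^ γ ∂volume) ≠ 0 →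
      FDPD volume Real.log γ (affTrans A μ g) (affTrans A μ f)
        = FDPD volume Real.log γ g f) :=
  fdpd_affine_invariance_general d γ ζ hγ A hA μ g f hg hf
end
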